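/- For 1 ≤ i < j ≤ 4 let E_{ij} denote the 4×4 real skew-symmetric matrix with (i,j) entry 1, (j,i) entry −1, and all other entries 0. Let Λ⁺ be the real span of {E₁₂+E₃₄, E₁₃−E₂₄, E₁₄+E₂₃} and Λ⁻ the real span of {E₁₂−E₃₄, E₁₃+E₂₄, E₁₄−E₂₃}. Let F be any 4×4 real skew-symmetric matrix, and write F = F⁺ + F⁻ with F⁺ ∈ Λ⁺ and F⁻ ∈ Λ⁻. Then the trace-free part of F² satisfies F² − (trace(F²)/4)·I = 2·F⁺·F⁻, where I is the 4×4 identity matrix. -/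

import Mathlib

open Matrix

/-- The elementary skew-symmetric matrix `E i j`, with `(i,j)` entry `1`,
`(j,i)` entry `-1`, and all other entries `0`. -/
def skewBasisMatrix (i j : Fin 4) : Matrix (Fin 4) (Fin 4) ℝ :=
  Matrix.single i j 1 - Matrix.single j i 1

/-- The space `Λ⁺` of self-dual 2-forms on `ℝ⁴`, viewed as skew-symmetric matrices. -/
def selfDualForms : Submodule ℝ (Matrix (Fin 4) (Fin 4) ℝ) :=
  Submodule.span ℝ
    {skewBasisMatrix 0 1 + skewBasisMatrix 2 3,
     skewBasisMatrix 0 2 - skewBasisMatrix 1 3,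
     skewBasisMatrix 0 3 + skewBasisMatrix 1 2}

/-- The space `Λ⁻` of anti-self-dual 2-forms on `ℝ⁴`, viewed as skew-symmetric matrices. -/
def antiSelfDualForms : Submodule ℝ (Matrix (Fin 4) (Fin 4) ℝ) :=
  Submodule.span ℝ
    {skewBasisMatrix 0 1 - skewBasisMatrix 2 3,
     skewBasisMatrix 0 2 + skewBasisMatrix 1 3,
     skewBasisMatrix 0 3 - skewBasisMatrix 1 2}

/-- The submodule of all `4 × 4` real skew-symmetric matrices. -/
def skewSymmMatrices : Submodule ℝ (Matrix (Fin 4) (Fin 4) ℝ) where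
  carrier := {A | Aᵀ = -A}
  add_mem' := by
    intro a b ha hb
    simp only [Set.mem_setOf_eq] at *
    rw [Matrix.transpose_add, ha, hb, neg_add]
  zero_mem' := by simp
  smul_mem' := by
    intro c a ha
    simp only [Set.mem_setOf_eq] at *
    rw [Matrix.transpose_smul, ha, smul_neg]

/-!
Λ⁺ and Λ⁻ are two commuting copies of the imaginary quaternions inside `𝔰𝔬(4)`: the square of an
element of either space is a scalar matrix, every element of Λ⁺ commutes with every element of Λ⁻,
and `F⁺ F⁻` is trace-free. Expanding `(F⁺ + F⁻)²` therefore leaves a scalar matrix plus `2 F⁺ F⁻`,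
and removing the trace removes exactly the scalar part.
-/

theorem Matrix.mul_self_add_sub_trace_smul_one {K n : Type*} [Field K] [CharZero K] [Fintype n]
    [DecidableEq n] {A B : Matrix n n K} {a b : K} (hA : A * A = a • 1) (hB : B * B = b • 1)
    (hAB : Commute A B) (htr : trace (A * B) = 0) :
    (A + B) * (A + B) - (trace ((A + B) * (A + B)) / Fintype.card n) • 1 = (2 : K) • (A * B) := by
  have hsq : (A + B) * (A + B) = (a + b) • 1 + (2 : K) • (A * B) := by
    rw [add_mul, mul_add, mul_add, hA, hB, ← hAB.eq, add_smul, two_smul]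
    abel
  rcases isEmpty_or_nonempty n with hn | hn
  · exact Subsingleton.elim _ _
  have hcard : (Fintype.card n : K) ≠ 0 := by exact_mod_cast Fintype.card_ne_zero
  rw [hsq, trace_add, trace_smul, trace_smul, trace_one, htr, smul_zero, add_zero, smul_eq_mul,
    mul_div_cancel_right₀ _ hcard, add_sub_cancel_left]

/-- `a (E₁₂ + E₃₄) + b (E₁₃ - E₂₄) + c (E₁₄ + E₂₃)`. -/
def selfDualMatrix (a b c : ℝ) : Matrix (Fin 4) (Fin 4) ℝ :=
  !![0, a, b, c; -a, 0, c, -b; -b, -c, 0, a; -c, b, -a, 0]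

/-- `a (E₁₂ - E₃₄) + b (E₁₃ + E₂₄) + c (E₁₄ - E₂₃)`. -/
def antiSelfDualMatrix (a b c : ℝ) : Matrix (Fin 4) (Fin 4) ℝ :=
  !![0, a, b, c; -a, 0, -c, b; -b, c, 0, -a; -c, -b, a, 0]

theorem exists_selfDualMatrix_eq {A : Matrix (Fin 4) (Fin 4) ℝ} (hA : A ∈ selfDualForms) :
    ∃ a b c, selfDualMatrix a b c = A := by
  obtain ⟨a, b, c, rfl⟩ := Submodule.mem_span_triple.mp hA
  refine ⟨a, b, c, ?_⟩
  ext i j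
  fin_cases i <;> fin_cases j <;> simp [selfDualMatrix, skewBasisMatrix, single]

theorem exists_antiSelfDualMatrix_eq {A : Matrix (Fin 4) (Fin 4) ℝ}
    (hA : A ∈ antiSelfDualForms) : ∃ a b c, antiSelfDualMatrix a b c = A := by
  obtain ⟨a, b, c, rfl⟩ := Submodule.mem_span_triple.mp hA
  refine ⟨a, b, c, ?_⟩
  ext i j
  fin_cases i <;> fin_cases j <;> simp [antiSelfDualMatrix, skewBasisMatrix, single]

theorem selfDualMatrix_mul_self (a b c : ℝ) :
    selfDualMatrix a b c * selfDualMatrix a b c = (-(a ^ 2 + b ^ 2 + c ^ 2)) • 1 := by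
  ext i j
  fin_cases i <;> fin_cases j <;> simp [selfDualMatrix, mul_apply, Fin.sum_univ_four] <;> ring

theorem antiSelfDualMatrix_mul_self (a b c : ℝ) :
    antiSelfDualMatrix a b c * antiSelfDualMatrix a b c = (-(a ^ 2 + b ^ 2 + c ^ 2)) • 1 := by
  ext i j
  fin_cases i <;> fin_cases j <;> simp [antiSelfDualMatrix, mul_apply, Fin.sum_univ_four] <;> ring

theorem commute_selfDualMatrix_antiSelfDualMatrix (a b c d e f : ℝ) :
    Commute (selfDualMatrix a b c) (antiSelfDualMatrix d e f) := by
  ext i j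
  fin_cases i <;> fin_cases j <;>
    simp [selfDualMatrix, antiSelfDualMatrix, mul_apply, Fin.sum_univ_four] <;> ring

theorem trace_selfDualMatrix_mul_antiSelfDualMatrix (a b c d e f : ℝ) :
    trace (selfDualMatrix a b c * antiSelfDualMatrix d e f) = 0 := by
  simp [selfDualMatrix, antiSelfDualMatrix, trace, Fin.sum_univ_four]
  ring

theorem traceFree_sq_eq_two_smul_mul_general
    (F Fp Fm : Matrix (Fin 4) (Fin 4) ℝ)
    (hFp : Fp ∈ selfDualForms) (hFm : Fm ∈ antiSelfDualForms)
    (hsum : F = Fp + Fm) :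
    F * F - ((F * F).trace / 4) • (1 : Matrix (Fin 4) (Fin 4) ℝ) =
      (2 : ℝ) • (Fp * Fm) := by
  obtain ⟨a, b, c, rfl⟩ := exists_selfDualMatrix_eq hFp
  obtain ⟨d, e, f, rfl⟩ := exists_antiSelfDualMatrix_eq hFm
  subst hsum
  simpa only [Fintype.card_fin, Nat.cast_ofNat] using
    mul_self_add_sub_trace_smul_one (selfDualMatrix_mul_self a b c)
      (antiSelfDualMatrix_mul_self d e f) (commute_selfDualMatrix_antiSelfDualMatrix a b c d e f)
      (trace_selfDualMatrix_mul_antiSelfDualMatrix a b c d e f)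

/-- The key pointwise identity `[F∘F]₀ = 2F⁺∘F⁻`: for a skew-symmetric `F`
written as `F = F⁺ + F⁻` with `F⁺ ∈ Λ⁺` and `F⁻ ∈ Λ⁻`, the trace-free part of
`F²` equals `2·F⁺·F⁻`. -/
theorem traceFree_sq_eq_two_smul_mul
    (F Fp Fm : Matrix (Fin 4) (Fin 4) ℝ)
    (hF : Fᵀ = -F) (hFp : Fp ∈ selfDualForms) (hFm : Fm ∈ antiSelfDualForms)
    (hsum : F = Fp + Fm) :
    F * F - ((F * F).trace / 4) • (1 : Matrix (Fin 4) (Fin 4) ℝ) =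
      (2 : ℝ) • (Fp * Fm) :=
  traceFree_sq_eq_two_smul_mul_general F Fp Fm hFp hFm hsum
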